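/- Let s : ℕ → ℂ with s(0) = 1. Then s(n) = s(1)^n holds for every natural number n if and only if χ(λ,s) = 0 for every tuple λ of positive integers with len(λ) ≥ 2. -/

import Mathlib

open Finset

/-- `P` is a set partition of the finite set `s`. -/
def IsPartitionOf {α : Type*} [DecidableEq α] (s : Finset α) (P : Finset (Finset α)) : Prop :=
  ∅ ∉ P ∧ (∀ B ∈ P, B ⊆ s) ∧ ∀ a ∈ s, ∃! B, B ∈ P ∧ a ∈ B

open Classical in
noncomputable def partitionsOf {α : Type*} [DecidableEq α] (s : Finset α) :
    Finset (Finset (Finset α)) :=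
  s.powerset.powerset.filter (IsPartitionOf s)

/-- `χ(λ, s)` for a tuple `λ` of integers indexed by a finite set `I`:
`χ(λ,s) = ∑_σ (−1)^{|σ|−1}(|σ|−1)!·∏_{B∈σ} s(∑_{i∈B} λ_i)`,
where `σ` ranges over all set partitions of `I`. -/
noncomputable def chiFam {ι : Type*} [DecidableEq ι] (I : Finset ι) (lam : ι → ℕ)
    (s : ℕ → ℂ) : ℂ :=
  ∑ P ∈ partitionsOf I,
    (-1 : ℂ) ^ (P.card - 1) * ((P.card - 1).factorial : ℂ) * ∏ B ∈ P, s (∑ i ∈ B, lam i)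

/-!
Counting the maps from `I` to a `y`-element set by their kernel partitions gives
`∑_P y (y - 1) ⋯ (y - |P| + 1) = y ^ |I|`; comparing the coefficients of `y` shows that
`∑_P (-1) ^ (|P| - 1) (|P| - 1)!` vanishes once `|I| ≥ 2`. If `s n = s 1 ^ n`, every product in
`χ(λ, s)` equals `s 1 ^ |λ|`, so `χ(λ, s)` is this vanishing sum times `s 1 ^ |λ|`. Conversely,
if `s k = s 1 ^ k` for all `k < n`, then `χ((1, …, 1), s)` and `χ((1, …, 1), (s 1 ^ ·)) = 0`
differ only in the one-block term, by `s n - s 1 ^ n`; induction on `n` finishes.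
-/

section Partitions

variable {ι : Type*} [DecidableEq ι] {I : Finset ι} {P : Finset (Finset ι)}

theorem mem_partitionsOf : P ∈ partitionsOf I ↔ IsPartitionOf I P := by
  classical
  refine ⟨fun h => (mem_filter.mp h).2, fun h => mem_filter.mpr ⟨?_, h⟩⟩
  exact mem_powerset.mpr fun B hB => mem_powerset.mpr (h.2.1 B hB)

namespace IsPartitionOf

theorem eq_of_mem_of_mem (hP : IsPartitionOf I P) {B C : Finset ι} (hB : B ∈ P) (hC : C ∈ P)
    {x : ι} (hxB : x ∈ B) (hxC : x ∈ C) : B = C :=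
  (hP.2.2 x (hP.2.1 B hB hxB)).unique ⟨hB, hxB⟩ ⟨hC, hxC⟩

theorem pairwiseDisjoint (hP : IsPartitionOf I P) : (P : Set (Finset ι)).PairwiseDisjoint id :=
  fun _ hB _ hC hne => disjoint_left.mpr fun _ hxB hxC => hne (hP.eq_of_mem_of_mem hB hC hxB hxC)

theorem biUnion_eq (hP : IsPartitionOf I P) : P.biUnion id = I := by
  ext x
  simp only [mem_biUnion, id]
  refine ⟨fun ⟨B, hB, hx⟩ => hP.2.1 B hB hx, fun hx => ?_⟩
  obtain ⟨B, ⟨hB, hxB⟩, -⟩ := hP.2.2 x hx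
  exact ⟨B, hB, hxB⟩

theorem sum_sum {M : Type*} [AddCommMonoid M] (hP : IsPartitionOf I P) (f : ι → M) :
    ∑ B ∈ P, ∑ i ∈ B, f i = ∑ i ∈ I, f i := by
  rw [← hP.biUnion_eq, sum_biUnion hP.pairwiseDisjoint]
  rfl

theorem nonempty (hP : IsPartitionOf I P) (hI : I.Nonempty) : P.Nonempty := by
  obtain ⟨x, hx⟩ := hI
  obtain ⟨B, ⟨hB, -⟩, -⟩ := hP.2.2 x hx
  exact ⟨B, hB⟩

theorem ssubset_of_ne_singleton (hP : IsPartitionOf I P) (hne : P ≠ {I}) {B : Finset ι}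
    (hB : B ∈ P) : B ⊂ I := by
  refine (hP.2.1 B hB).ssubset_of_ne fun hBI => hne ?_
  subst hBI
  refine eq_singleton_iff_unique_mem.mpr ⟨hB, fun C hC => ?_⟩
  obtain ⟨x, hx⟩ := nonempty_iff_ne_empty.mpr fun h => hP.1 (h ▸ hC)
  exact hP.eq_of_mem_of_mem hC hB hx (hP.2.1 C hC hx)

theorem insert {B : Finset ι} {Q : Finset (Finset ι)} (hB : B.Nonempty) (hBI : B ⊆ I)
    (hQ : IsPartitionOf (I \ B) Q) : IsPartitionOf I (insert B Q) := by
  refine ⟨?_, ?_, fun x hx => ?_⟩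
  · intro h
    rcases mem_insert.mp h with h | h
    · exact hB.ne_empty h.symm
    · exact hQ.1 h
  · intro C hC
    rcases mem_insert.mp hC with rfl | h
    · exact hBI
    · exact (hQ.2.1 C h).trans sdiff_subset
  · by_cases hxB : x ∈ B
    · refine ⟨B, ⟨mem_insert_self _ _, hxB⟩, fun C ⟨hC, hxC⟩ => ?_⟩
      rcases mem_insert.mp hC with rfl | h
      · rfl
      · exact absurd hxB (mem_sdiff.mp (hQ.2.1 C h hxC)).2
    · obtain ⟨C, ⟨hC, hxC⟩, huniq⟩ := hQ.2.2 x (mem_sdiff.mpr ⟨hx, hxB⟩)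
      refine ⟨C, ⟨mem_insert_of_mem hC, hxC⟩, fun D ⟨hD, hxD⟩ => ?_⟩
      rcases mem_insert.mp hD with rfl | h
      · exact absurd hxD hxB
      · exact huniq D ⟨h, hxD⟩

theorem erase (hP : IsPartitionOf I P) {B : Finset ι} (hB : B ∈ P) :
    IsPartitionOf (I \ B) (P.erase B) := by
  refine ⟨fun h => hP.1 (mem_of_mem_erase h), fun C hC => ?_, fun x hx => ?_⟩
  · exact subset_sdiff.mpr ⟨hP.2.1 C (mem_of_mem_erase hC),
      hP.pairwiseDisjoint (mem_of_mem_erase hC) hB (ne_of_mem_erase hC)⟩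
  · obtain ⟨hxI, hxB⟩ := mem_sdiff.mp hx
    obtain ⟨C, ⟨hC, hxC⟩, huniq⟩ := hP.2.2 x hxI
    refine ⟨C, ⟨mem_erase.mpr ⟨fun h => hxB (h ▸ hxC), hC⟩, hxC⟩, fun D ⟨hD, hxD⟩ => ?_⟩
    exact huniq D ⟨mem_of_mem_erase hD, hxD⟩

end IsPartitionOf

theorem partitionsOf_empty : partitionsOf (∅ : Finset ι) = {∅} := by
  ext P
  rw [mem_partitionsOf, mem_singleton]
  refine ⟨fun hP => eq_empty_of_forall_notMem fun B hB => ?_, ?_⟩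
  · exact hP.1 (subset_empty.mp (hP.2.1 B hB) ▸ hB)
  · rintro rfl
    exact ⟨notMem_empty _, by simp, by simp⟩

theorem singleton_mem_partitionsOf (hI : I.Nonempty) : {I} ∈ partitionsOf I := by
  refine mem_partitionsOf.mpr ⟨fun h => hI.ne_empty (mem_singleton.mp h).symm, by simp, ?_⟩
  exact fun x hx => ⟨I, ⟨mem_singleton_self I, hx⟩, fun B ⟨hB, _⟩ => mem_singleton.mp hB⟩

theorem sdiff_insert_eq_erase_sdiff (I C : Finset ι) (a : ι) : I \ insert a C = I.erase a \ C := by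
  rw [sdiff_insert, erase_sdiff_comm]

theorem insert_notMem_of_mem_partitionsOf_erase_sdiff {Q : Finset (Finset ι)} {C : Finset ι}
    {a : ι} (hQ : Q ∈ partitionsOf (I.erase a \ C)) : insert a C ∉ Q := fun h => by
  simpa using (mem_partitionsOf.mp hQ).2.1 _ h (mem_insert_self a C)

theorem sum_partitionsOf_eq_sum_powerset_erase {M : Type*} [AddCommMonoid M] {a : ι} (ha : a ∈ I)
    (f : Finset (Finset ι) → M) :
    ∑ P ∈ partitionsOf I, f P =
      ∑ C ∈ (I.erase a).powerset,
        ∑ Q ∈ partitionsOf (I.erase a \ C), f (insert (insert a C) Q) := by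
  have hins : ∀ C ∈ (I.erase a).powerset, ∀ Q ∈ partitionsOf (I.erase a \ C),
      IsPartitionOf I (insert (insert a C) Q) := fun C hC Q hQ =>
    IsPartitionOf.insert (insert_nonempty a C)
      (insert_subset ha ((mem_powerset.mp hC).trans (erase_subset a I)))
      (by rwa [sdiff_insert_eq_erase_sdiff, ← mem_partitionsOf])
  have ha_notMem : ∀ C ∈ (I.erase a).powerset, a ∉ C := fun C hC h =>
    (mem_erase.mp (mem_powerset.mp hC h)).1 rfl
  rw [sum_sigma']
  symm
  refine sum_bij (fun x _ => insert (insert a x.1) x.2) ?_ ?_ ?_ (fun _ _ => rfl)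
  · rintro ⟨C, Q⟩ hx
    obtain ⟨hC, hQ⟩ := mem_sigma.mp hx
    exact mem_partitionsOf.mpr (hins C hC Q hQ)
  · rintro ⟨C, Q⟩ hx ⟨C', Q'⟩ hx' heq
    obtain ⟨hC, hQ⟩ : C ∈ _ ∧ Q ∈ partitionsOf (I.erase a \ C) := mem_sigma.mp hx
    obtain ⟨hC', hQ'⟩ : C' ∈ _ ∧ Q' ∈ partitionsOf (I.erase a \ C') := mem_sigma.mp hx'
    have hblock : insert a C = insert a C' :=
      (hins C hC Q hQ).eq_of_mem_of_mem (mem_insert_self _ _) (heq ▸ mem_insert_self _ _)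
        (mem_insert_self a C) (mem_insert_self a C')
    have hCC' : C = C' := by
      rw [← erase_insert (ha_notMem C hC), hblock, erase_insert (ha_notMem C' hC')]
    subst hCC'
    have hQQ' : Q = Q' := by
      rw [← erase_insert (insert_notMem_of_mem_partitionsOf_erase_sdiff hQ), heq,
        erase_insert (insert_notMem_of_mem_partitionsOf_erase_sdiff hQ')]
    rw [hQQ']
  · intro P hP
    have hP' := mem_partitionsOf.mp hP
    obtain ⟨B, ⟨hB, haB⟩, -⟩ := hP'.2.2 a ha
    have hBa : insert a (B.erase a) = B := insert_erase haB
    refine ⟨⟨B.erase a, P.erase B⟩, mem_sigma.mpr ⟨?_, ?_⟩, ?_⟩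
    · exact mem_powerset.mpr (erase_subset_erase a (hP'.2.1 B hB))
    · rw [mem_partitionsOf, ← sdiff_insert_eq_erase_sdiff, hBa]
      exact hP'.erase hB
    · simp only [hBa, insert_erase hB]

end Partitions

section Pochhammer

open Polynomial

variable {R : Type*} [CommRing R]

theorem coeff_descPochhammer_succ_one (k : ℕ) :
    (descPochhammer R (k + 1)).coeff 1 = (-1) ^ k * k.factorial := by
  have hneg : (descPochhammer R k).eval (-1) = (-1) ^ k * k.factorial := by
    have h := ascPochhammer_eval_neg_eq_descPochhammer R (-1) k
    rw [neg_neg, ascPochhammer_eval_one] at h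
    rw [h, ← mul_assoc, ← mul_pow, neg_one_mul, neg_neg, one_pow, one_mul]
  rw [descPochhammer_succ_left, coeff_X_mul, coeff_zero_eq_eval_zero, eval_comp, eval_sub, eval_X,
    eval_one, zero_sub, hneg]

theorem sum_partitionsOf_descPochhammer {ι : Type*} [DecidableEq ι] (I : Finset ι) :
    ∑ P ∈ partitionsOf I, descPochhammer R P.card = X ^ I.card := by
  induction I using Finset.strongInduction with
  | H I ih =>
    rcases I.eq_empty_or_nonempty with rfl | ⟨a, ha⟩
    · simp [partitionsOf_empty]
    rw [sum_partitionsOf_eq_sum_powerset_erase ha]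
    have hblock : ∀ C ∈ (I.erase a).powerset,
        ∑ Q ∈ partitionsOf (I.erase a \ C), descPochhammer R (insert (insert a C) Q).card =
          X * (X - 1) ^ (I.erase a \ C).card := by
      intro C hC
      have hsub : I.erase a \ C ⊂ I := sdiff_subset.trans_ssubset (erase_ssubset ha)
      calc ∑ Q ∈ partitionsOf (I.erase a \ C), descPochhammer R (insert (insert a C) Q).card
          = ∑ Q ∈ partitionsOf (I.erase a \ C), X * (descPochhammer R Q.card).comp (X - 1) := by
            refine sum_congr rfl fun Q hQ => ?_
            rw [card_insert_of_notMem (insert_notMem_of_mem_partitionsOf_erase_sdiff hQ),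
              descPochhammer_succ_left]
        _ = X * (∑ Q ∈ partitionsOf (I.erase a \ C), descPochhammer R Q.card).comp (X - 1) := by
            rw [← mul_sum, ← coe_compRingHom_apply, map_sum]
            rfl
        _ = X * (X - 1) ^ (I.erase a \ C).card := by
            rw [ih _ hsub, pow_comp, X_comp]
    rw [sum_congr rfl hblock, ← mul_sum]
    have hbinom : ∑ C ∈ (I.erase a).powerset, (X - 1 : R[X]) ^ (I.erase a \ C).card =
        X ^ (I.erase a).card := by
      have h := sum_pow_mul_eq_add_pow (1 : R[X]) (X - 1) (I.erase a)
      rw [add_sub_cancel] at h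
      rw [← h]
      refine sum_congr rfl fun C hC => ?_
      rw [one_pow, one_mul, card_sdiff_of_subset (mem_powerset.mp hC)]
    rw [hbinom, ← pow_succ', card_erase_add_one ha]

theorem sum_partitionsOf_signed_factorial_eq_zero {ι : Type*} [DecidableEq ι] {I : Finset ι}
    (hI : 2 ≤ I.card) :
    ∑ P ∈ partitionsOf I, (-1 : R) ^ (P.card - 1) * ((P.card - 1).factorial : R) = 0 := by
  have h := congrArg (coeff · 1) (sum_partitionsOf_descPochhammer (R := R) I)
  simp only [finsetSum_coeff, coeff_X_pow, if_neg (by omega : 1 ≠ I.card)] at h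
  rw [← h]
  refine sum_congr rfl fun P hP => ?_
  have hP : 0 < P.card :=
    card_pos.mpr ((mem_partitionsOf.mp hP).nonempty (card_pos.mp (by omega)))
  rw [← coeff_descPochhammer_succ_one, Nat.sub_add_cancel hP]

end Pochhammer

section Chi

variable {ι : Type*} [DecidableEq ι] (lam : ι → ℕ)

theorem chiFam_pow_eq_zero (I : Finset ι) (c : ℂ) (hI : 2 ≤ I.card) : chiFam I lam (c ^ ·) = 0 := by
  have hprod : ∀ P ∈ partitionsOf I, ∏ B ∈ P, c ^ (∑ i ∈ B, lam i) = c ^ (∑ i ∈ I, lam i) :=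
    fun P hP => by rw [prod_pow_eq_pow_sum, (mem_partitionsOf.mp hP).sum_sum]
  rw [chiFam, sum_congr rfl fun P hP => by rw [hprod P hP], ← sum_mul,
    sum_partitionsOf_signed_factorial_eq_zero hI, zero_mul]

theorem chiFam_sub_chiFam {I : Finset ι} (s t : ℕ → ℂ) (hI : I.Nonempty)
    (hst : ∀ B ⊂ I, s (∑ i ∈ B, lam i) = t (∑ i ∈ B, lam i)) :
    chiFam I lam s - chiFam I lam t = s (∑ i ∈ I, lam i) - t (∑ i ∈ I, lam i) := by
  rw [chiFam, chiFam, ← sum_sub_distrib, sum_eq_single_of_mem _ (singleton_mem_partitionsOf hI)]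
  · simp
  · intro P hP hne
    rw [prod_congr rfl fun B hB =>
      hst B ((mem_partitionsOf.mp hP).ssubset_of_ne_singleton hne hB), sub_self]

end Chi

/-- for `s : ℕ → ℂ` with `s 0 = 1`, we have `s n = s 1 ^ n` for all `n` iff
`χ(λ,s) = 0` for every tuple `λ` of positive integers of length at least `2`. -/
theorem stmt1 (s : ℕ → ℂ) (hs0 : s 0 = 1) :
    (∀ n : ℕ, s n = s 1 ^ n) ↔
      ∀ ℓ : ℕ, 2 ≤ ℓ → ∀ lam : Fin ℓ → ℕ, (∀ i, 0 < lam i) →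
        chiFam (Finset.univ : Finset (Fin ℓ)) lam s = 0 := by
  refine ⟨fun hs ℓ hℓ lam _ => ?_, fun hχ n => ?_⟩
  · rw [show s = (s 1 ^ ·) from funext hs]
    exact chiFam_pow_eq_zero _ _ _ (by simpa using hℓ)
  induction n using Nat.strong_induction_on with
  | _ n ih =>
    obtain _ | _ | n := n
    · simpa using hs0
    · simp
    have key := chiFam_sub_chiFam (fun _ : Fin (n + 2) => 1) s (s 1 ^ ·) univ_nonempty
      fun B hB => by simpa using ih B.card (by simpa using card_lt_card hB : B.card < n + 2)
    rw [hχ _ le_add_self _ fun _ => one_pos, chiFam_pow_eq_zero _ _ _ (by simp)] at key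
    simpa [sub_eq_zero] using key.symm
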